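/- arXiv:2505.06712 — 4 statements merged into one kernel-verified Lean document; each statement's English description precedes it below -/
import Mathlib

section
/- For a linear map L : ℝ^m → ℝ^k whose p-th singular value σ_p(L) is positive for some p ∈ {1,…,k}, for every z ∈ ℝ^k and all r, ε > 0, the Lebesgue measure of the set {α ∈ B_m(0,r) : ‖Lα + z‖ ≤ ε} divided by the Lebesgue measure of B_m(0,r) is at most C_{m,k} (ε/(σ_p(L) r))^p, where C_{m,k} > 0 depends only on m and k. -/
/-!
Pick a `p`-dimensional subspace `E` on which `‖L v‖ ≥ (σ_p/2) ‖v‖`. If two translates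
`u + A`, `w + A` (with `u, w ∈ E`) of the set `A = {α ∈ B(0,r) : ‖Lα + z‖ ≤ ε}` meet, then
`‖L (u - w)‖ ≤ 2ε`, so translates by points of `E` that are `6ε/σ_p`-separated are disjoint.
A cubical grid in `E ∩ B(0,r)` supplies `≳ (σ_p r / ε)^p` such points, and all these translates
lie in `B(0,2r)`, whose volume is `2^m` times that of `B(0,r)`.
-/

open MeasureTheory

/-- The `p`-th singular value of a linear map `L : ℝ^m → ℝ^k`, via the Courant–Fischer
max–min characterization: the supremum of `t ≥ 0` such that `t‖v‖ ≤ ‖Lv‖` on some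
`p`-dimensional subspace. -/
noncomputable def singularValue {m k : ℕ}
    (L : EuclideanSpace ℝ (Fin m) →ₗ[ℝ] EuclideanSpace ℝ (Fin k)) (p : ℕ) : ℝ :=
  sSup {t : ℝ | 0 ≤ t ∧ ∃ E : Submodule ℝ (EuclideanSpace ℝ (Fin m)),
    Module.finrank ℝ E = p ∧ ∀ v ∈ E, t * ‖v‖ ≤ ‖L v‖}

open Metric Finset Module
open scoped ENNReal Pointwise

theorem exists_submodule_of_lt_singularValue {m k : ℕ}
    (L : EuclideanSpace ℝ (Fin m) →ₗ[ℝ] EuclideanSpace ℝ (Fin k)) {p : ℕ} {t : ℝ} (ht : 0 ≤ t)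
    (htL : t < singularValue L p) :
    ∃ E : Submodule ℝ (EuclideanSpace ℝ (Fin m)), finrank ℝ E = p ∧
      ∀ v ∈ E, t * ‖v‖ ≤ ‖L v‖ := by
  have hne : {t : ℝ | 0 ≤ t ∧ ∃ E : Submodule ℝ (EuclideanSpace ℝ (Fin m)),
      finrank ℝ E = p ∧ ∀ v ∈ E, t * ‖v‖ ≤ ‖L v‖}.Nonempty :=
    Set.nonempty_iff_ne_empty.2 fun h => by
      rw [singularValue, h, Real.sSup_empty] at htL
      linarith
  obtain ⟨t', ⟨-, E, hEp, hE⟩, htt'⟩ := exists_lt_of_lt_csSup hne htL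
  exact ⟨E, hEp, fun v hv => (mul_le_mul_of_nonneg_right htt'.le (norm_nonneg v)).trans (hE v hv)⟩

theorem card_mul_measure_le_of_pairwiseDisjoint_vadd {V : Type*} [AddGroup V]
    [MeasurableSpace V] [MeasurableAdd V] (μ : Measure V) [μ.IsAddLeftInvariant] {A S : Set V}
    (hA : MeasurableSet A) {F : Finset V} (hF : (F : Set V).PairwiseDisjoint (· +ᵥ A))
    (hFS : ∀ v ∈ F, v +ᵥ A ⊆ S) :
    #F * μ A ≤ μ S :=
  calc (#F : ℝ≥0∞) * μ A = ∑ v ∈ F, μ (v +ᵥ A) := by simp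
    _ = μ (⋃ v ∈ F, v +ᵥ A) := (measure_biUnion_finset hF fun v _ => hA.const_vadd v).symm
    _ ≤ μ S := measure_mono (Set.iUnion₂_subset hFS)

theorem disjoint_vadd_of_two_mul_lt_norm_sub {V W F : Type*} [AddCommGroup V]
    [SeminormedAddCommGroup W] [FunLike F V W] [AddMonoidHomClass F V W] (f : F) (z : W)
    {ε : ℝ} {A : Set V} (hA : ∀ a ∈ A, ‖f a + z‖ ≤ ε) {u w : V} (huw : 2 * ε < ‖f (u - w)‖) :
    Disjoint (u +ᵥ A) (w +ᵥ A) := by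
  rw [Set.disjoint_left]
  rintro _ ⟨a, ha, rfl⟩ ⟨b, hb, hba⟩
  have hf : f (u - w) = (f b + z) - (f a + z) := by
    have hdiff : u - w = b - a := by
      simp only [vadd_eq_add] at hba
      rw [sub_eq_sub_iff_add_eq_add, ← hba, add_comm]
    rw [hdiff, map_sub]
    abel
  rw [hf] at huw
  linarith [norm_sub_le (f b + z) (f a + z), hA a ha, hA b hb]

theorem EuclideanSpace.norm_le_sqrt_card_mul {ι : Type*} [Fintype ι] (x : EuclideanSpace ℝ ι)
    {c : ℝ} (hc : 0 ≤ c) (hx : ∀ i, |x i| ≤ c) : ‖x‖ ≤ √(Fintype.card ι) * c := by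
  rw [EuclideanSpace.norm_eq, ← Real.sqrt_sq hc, ← Real.sqrt_mul (Nat.cast_nonneg _)]
  refine Real.sqrt_le_sqrt ?_
  calc ∑ i, ‖x i‖ ^ 2 ≤ ∑ _i : ι, c ^ 2 :=
        sum_le_sum fun i _ => by simpa [sq_abs] using pow_le_pow_left₀ (abs_nonneg _) (hx i) 2
    _ = Fintype.card ι * c ^ 2 := by simp

theorem EuclideanSpace.exists_finset_grid {ι : Type*} [Fintype ι] {s : ℝ} (hs : 0 < s)
    {M : ℕ} (hM : 0 < M) :
    ∃ F : Finset (EuclideanSpace ℝ ι), #F = M ^ Fintype.card ι ∧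
      (∀ x ∈ F, ‖x‖ ≤ √(Fintype.card ι) * (s * (M - 1))) ∧
      (F : Set (EuclideanSpace ℝ ι)).Pairwise fun x y => s ≤ ‖x - y‖ := by
  classical
  let g : (ι → Fin M) → EuclideanSpace ℝ ι := fun n => WithLp.toLp 2 fun i => s * n i
  have hsep : ∀ n n', n ≠ n' → s ≤ ‖g n - g n'‖ := by
    intro n n' hnn'
    obtain ⟨i, hi⟩ := Function.ne_iff.mp hnn'
    have hi' : (1 : ℝ) ≤ |(n i : ℝ) - n' i| := by
      have : ((n i : ℕ) : ℤ) ≠ (n' i : ℕ) := by exact_mod_cast Fin.val_injective.ne hi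
      exact_mod_cast Int.one_le_abs (sub_ne_zero.mpr this)
    calc s ≤ s * |(n i : ℝ) - n' i| := le_mul_of_one_le_right hs.le hi'
      _ = ‖(g n - g n') i‖ := by simp [g, ← mul_sub, abs_of_pos hs]
      _ ≤ ‖g n - g n'‖ := PiLp.norm_apply_le _ i
  have hg : Function.Injective g := fun n n' h => by
    by_contra hnn'
    have := hsep n n' hnn'
    rw [h, sub_self, norm_zero] at this
    linarith
  refine ⟨univ.image g, by simp [card_image_of_injective _ hg], ?_, ?_⟩
  · simp only [mem_image, mem_univ, true_and, forall_exists_index, forall_apply_eq_imp_iff]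
    intro n
    have hM' : (1 : ℝ) ≤ M := by exact_mod_cast hM
    refine EuclideanSpace.norm_le_sqrt_card_mul _ (by nlinarith) fun i => ?_
    have : ((n i : ℕ) : ℝ) + 1 ≤ M := by exact_mod_cast (n i).isLt
    simp only [g, abs_mul, abs_of_pos hs, Nat.abs_cast]
    gcongr
    linarith
  · simp only [coe_image, coe_univ, Set.image_univ]
    rintro _ ⟨n, rfl⟩ _ ⟨n', rfl⟩ hnn'
    exact hsep n n' fun h => hnn' (h ▸ rfl)

theorem exists_finset_separated_one_le_card {E : Type*} [NormedAddCommGroup E]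
    [InnerProductSpace ℝ E] [FiniteDimensional ℝ E] (hE : 0 < finrank ℝ E) {s R : ℝ}
    (hs : 0 < s) (hR : 0 < R) :
    ∃ F : Finset E, (∀ x ∈ F, ‖x‖ ≤ R) ∧ (F : Set E).Pairwise (fun x y => s ≤ ‖x - y‖) ∧
      1 ≤ (s * √(finrank ℝ E) / R) ^ finrank ℝ E * #F := by
  set d := finrank ℝ E
  have hd : 0 < √(d : ℝ) := Real.sqrt_pos.2 (by exact_mod_cast hE)
  set M := ⌈R / (s * √d)⌉₊
  have hRM : R ≤ s * √d * M := by
    rw [← div_le_iff₀' (by positivity)]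
    exact Nat.le_ceil _
  obtain ⟨G, hGcard, hGnorm, hGsep⟩ :=
    EuclideanSpace.exists_finset_grid (ι := Fin d) hs (M := M) (Nat.ceil_pos.2 (by positivity))
  let e := (stdOrthonormalBasis ℝ E).repr.symm
  classical
  refine ⟨G.image e, ?_, ?_, ?_⟩
  · simp only [mem_image, forall_exists_index, and_imp, forall_apply_eq_imp_iff₂]
    intro y hy
    have hM : (M : ℝ) - 1 ≤ R / (s * √d) := by
      linarith [Nat.ceil_lt_add_one (by positivity : 0 ≤ R / (s * √d))]
    calc ‖e y‖ = ‖y‖ := e.norm_map y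
      _ ≤ √d * (s * (M - 1)) := by simpa using hGnorm y hy
      _ ≤ √d * (s * (R / (s * √d))) := by gcongr
      _ = R := by field_simp
  · rw [coe_image]
    rintro _ ⟨x, hx, rfl⟩ _ ⟨y, hy, rfl⟩ hxy
    rw [← map_sub, e.norm_map]
    exact hGsep hx hy (ne_of_apply_ne _ hxy)
  · rw [card_image_of_injective _ e.injective, hGcard, Fintype.card_fin, Nat.cast_pow, ← mul_pow]
    refine one_le_pow₀ ?_
    rw [div_mul_eq_mul_div, one_le_div hR]
    exact hRM

theorem measure_sep_ball_le_of_le_norm_on_submodule {V W : Type*} [NormedAddCommGroup V]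
    [InnerProductSpace ℝ V] [FiniteDimensional ℝ V] [MeasurableSpace V] [BorelSpace V]
    (μ : Measure V) [μ.IsAddHaarMeasure] [NormedAddCommGroup W] [NormedSpace ℝ W]
    (L : V →ₗ[ℝ] W) (E : Submodule ℝ V) (hE : 0 < finrank ℝ E) {t : ℝ} (ht : 0 < t)
    (hLE : ∀ v ∈ E, t * ‖v‖ ≤ ‖L v‖) (z : W) {r ε : ℝ} (hr : 0 < r) (hε : 0 < ε) :
    μ {α ∈ ball (0 : V) r | ‖L α + z‖ ≤ ε} ≤
      ENNReal.ofReal (2 ^ finrank ℝ V * (3 * ε / t * √(finrank ℝ E) / r) ^ finrank ℝ E) *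
        μ (ball 0 r) := by
  classical
  set A := {α ∈ ball (0 : V) r | ‖L α + z‖ ≤ ε}
  have hA : MeasurableSet A := by
    have : Continuous fun α => ‖L α + z‖ := by fun_prop
    exact measurableSet_ball.inter (measurableSet_le this.measurable measurable_const)
  obtain ⟨F, hFr, hFsep, hFcard⟩ :=
    exists_finset_separated_one_le_card hE (by positivity : 0 < 3 * ε / t) hr
  set c := (3 * ε / t * √(finrank ℝ E) / r) ^ finrank ℝ E
  have hdisj : (↑(F.image Subtype.val) : Set V).PairwiseDisjoint (· +ᵥ A) := by
    rw [coe_image]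
    rintro _ ⟨u, hu, rfl⟩ _ ⟨w, hw, rfl⟩ huw
    refine disjoint_vadd_of_two_mul_lt_norm_sub L z (fun a ha => ha.2) ?_
    calc 2 * ε < t * (3 * ε / t) := by field_simp; linarith
      _ ≤ t * ‖u - w‖ := by gcongr; exact hFsep hu hw (ne_of_apply_ne _ huw)
      _ ≤ ‖L (↑u - ↑w)‖ := by simpa using hLE _ (u - w).2
  have hsub : ∀ v ∈ F.image Subtype.val, v +ᵥ A ⊆ ball (0 : V) (2 * r) := by
    simp only [mem_image]
    rintro _ ⟨u, hu, rfl⟩ _ ⟨a, ha, rfl⟩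
    rw [mem_ball_zero_iff]
    calc ‖(u : V) +ᵥ a‖ ≤ ‖u‖ + ‖a‖ := norm_add_le _ _
      _ < r + r := add_lt_add_of_le_of_lt (hFr u hu) (mem_ball_zero_iff.1 ha.1)
      _ = 2 * r := by ring
  have hpack := card_mul_measure_le_of_pairwiseDisjoint_vadd μ hA hdisj hsub
  rw [card_image_of_injective _ Subtype.val_injective] at hpack
  calc μ A ≤ ENNReal.ofReal c * #F * μ A := by
        refine le_mul_of_one_le_left zero_le ?_
        rw [← ENNReal.ofReal_natCast, ← ENNReal.ofReal_mul (by positivity)]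
        exact ENNReal.one_le_ofReal.2 hFcard
    _ ≤ ENNReal.ofReal c * μ (ball 0 (2 * r)) := by
        rw [mul_assoc]; gcongr
    _ = ENNReal.ofReal (2 ^ finrank ℝ V * c) * μ (ball 0 r) := by
        rw [Measure.addHaar_ball_mul_of_pos μ 0 two_pos, ← mul_assoc,
          ← ENNReal.ofReal_mul (by positivity), mul_comm c]

/-- For every `m, k` there is a constant `C = C_{m,k} > 0` such that for every linear map
`L : ℝ^m → ℝ^k` whose `p`-th singular value is positive (`1 ≤ p ≤ k`), every `z ∈ ℝ^k` and
all `r, ε > 0`, the proportion of `α` in the ball `B_m(0,r)` with `‖Lα + z‖ ≤ ε` is at most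
`C (ε / (σ_p(L) r))^p`. -/
theorem stmt1 (m k : ℕ) :
    ∃ C : ℝ, 0 < C ∧
      ∀ (L : EuclideanSpace ℝ (Fin m) →ₗ[ℝ] EuclideanSpace ℝ (Fin k)) (p : ℕ),
        1 ≤ p → p ≤ k → 0 < singularValue L p →
        ∀ (z : EuclideanSpace ℝ (Fin k)) (r ε : ℝ), 0 < r → 0 < ε →
          volume {α ∈ Metric.ball (0 : EuclideanSpace ℝ (Fin m)) r | ‖L α + z‖ ≤ ε}
            ≤ ENNReal.ofReal (C * (ε / (singularValue L p * r)) ^ p) *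
              volume (Metric.ball (0 : EuclideanSpace ℝ (Fin m)) r) := by
  refine ⟨2 ^ m * (6 * (√k + 1)) ^ k, by positivity, ?_⟩
  intro L p hp hpk hσ z r ε hr hε
  set σ := singularValue L p
  obtain ⟨E, hEp, hLE⟩ := exists_submodule_of_lt_singularValue L (half_pos hσ).le (half_lt_self hσ)
  have h := measure_sep_ball_le_of_le_norm_on_submodule volume L E (hEp ▸ hp) (half_pos hσ) hLE
    z hr hε
  rw [hEp, finrank_euclideanSpace_fin] at h
  refine h.trans (mul_le_mul_left (ENNReal.ofReal_le_ofReal ?_) _)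
  have hscale : 3 * ε / (σ / 2) * √p / r = 6 * √p * (ε / (σ * r)) := by
    field_simp; ring
  have hconst : (6 * √(p : ℝ)) ^ p ≤ (6 * (√k + 1)) ^ k :=
    calc (6 * √(p : ℝ)) ^ p ≤ (6 * (√k + 1)) ^ p := by
          gcongr; linarith [Real.sqrt_le_sqrt (show (p : ℝ) ≤ k by exact_mod_cast hpk)]
      _ ≤ (6 * (√k + 1)) ^ k :=
          pow_le_pow_right₀ (by linarith [Real.sqrt_nonneg (k : ℝ)]) hpk
  rw [hscale, mul_pow, mul_assoc]
  gcongr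
end

section
/- For every collection z₁, …, z_k of k distinct points in ℝ^N and every collection of vectors u₁, …, u_k ∈ ℝ^N, there exists an N-variate polynomial p of degree at most 2k−1 such that ∇p(z_i) = u_i for every i ∈ {1, …, k}. -/
/-!
Build `p = ∑ᵢ ℓᵢ wᵢ`, where `ℓᵢ(x) = uᵢ ⬝ (x - zᵢ)` and `wᵢ` is the product of the squared
distances `|x - zⱼ|²`, `j ≠ i`, normalized so that `wᵢ(zᵢ) = 1`. Each squared distance vanishes
together with its gradient at its centre, hence so does `wᵢ` at every `zⱼ` with `j ≠ i`, and the
product rule leaves `∇p(zᵢ) = wᵢ(zᵢ) ∇ℓᵢ = uᵢ`. The degree is `1 + 2(k - 1) = 2k - 1`.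
-/

open Matrix MvPolynomial Finset

theorem HasFDerivAt.fun_mul_of_apply_eq_zero {𝕜 E : Type*} [NontriviallyNormedField 𝕜]
    [NormedAddCommGroup E] [NormedSpace 𝕜 E] {f g : E → 𝕜} {f' g' : E →L[𝕜] 𝕜} {a : E}
    (hf : HasFDerivAt f f' a) (hg : HasFDerivAt g g' a) (hfa : f a = 0) :
    HasFDerivAt (fun x => f x * g x) (g a • f') a :=
  (hf.fun_mul hg).congr_fderiv (by ext; simp [hfa])

namespace Matrix

variable {σ : Type*} [Fintype σ]

noncomputable def dotProductCLM (u : σ → ℝ) : (σ → ℝ) →L[ℝ] ℝ :=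
  LinearMap.toContinuousLinearMap (dotProductBilin ℝ ℝ u)

@[simp]
theorem dotProductCLM_apply (u v : σ → ℝ) : dotProductCLM u v = u ⬝ᵥ v := rfl

end Matrix

namespace MvPolynomial

variable {σ : Type*} [Fintype σ]

theorem hasFDerivAt_eval (p : MvPolynomial σ ℝ) (a : σ → ℝ) :
    HasFDerivAt (fun x => eval x p) (fderiv ℝ (fun x => eval x p) a) a :=
  (AnalyticOnNhd.eval_mvPolynomial p a trivial).differentiableAt.hasFDerivAt

theorem hasFDerivAt_zero_eval_mul {p : MvPolynomial σ ℝ} {a : σ → ℝ}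
    (hp : HasFDerivAt (fun x => eval x p) (0 : (σ → ℝ) →L[ℝ] ℝ) a) (hpa : eval a p = 0)
    (q : MvPolynomial σ ℝ) :
    HasFDerivAt (fun x => eval x (p * q)) (0 : (σ → ℝ) →L[ℝ] ℝ) a := by
  simpa using hp.fun_mul_of_apply_eq_zero (hasFDerivAt_eval q a) hpa

noncomputable def sqDist (z : σ → ℝ) : MvPolynomial σ ℝ := ∑ n, (X n - C (z n)) ^ 2

theorem eval_sqDist (x z : σ → ℝ) : eval x (sqDist z) = ∑ n, (x n - z n) ^ 2 := by
  simp [sqDist]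

theorem eval_sqDist_self (z : σ → ℝ) : eval z (sqDist z) = 0 := by
  simp [eval_sqDist]

theorem eval_sqDist_pos {x z : σ → ℝ} (h : x ≠ z) : 0 < eval x (sqDist z) := by
  obtain ⟨n, hn⟩ := Function.ne_iff.mp h
  rw [eval_sqDist]
  exact sum_pos' (fun m _ => sq_nonneg _)
    ⟨n, mem_univ n, pow_two_pos_of_ne_zero (sub_ne_zero.mpr hn)⟩

theorem totalDegree_sqDist_le (z : σ → ℝ) : (sqDist z).totalDegree ≤ 2 := by
  refine (totalDegree_finsetSum _ _).trans (Finset.sup_le fun n _ => ?_)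
  calc ((X n - C (z n)) ^ 2 : MvPolynomial σ ℝ).totalDegree
      ≤ 2 * (X n - C (z n) : MvPolynomial σ ℝ).totalDegree := totalDegree_pow _ _
    _ ≤ 2 * 1 := by
      gcongr
      exact (totalDegree_sub_C_le _ _).trans (totalDegree_X n).le

theorem hasFDerivAt_eval_sqDist_self (z : σ → ℝ) :
    HasFDerivAt (fun x => eval x (sqDist z)) (0 : (σ → ℝ) →L[ℝ] ℝ) z := by
  have hcoord (n : σ) : HasFDerivAt (fun x : σ → ℝ => (x n - z n) * (x n - z n))
      (0 : (σ → ℝ) →L[ℝ] ℝ) z := by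
    have h : HasFDerivAt (fun x : σ → ℝ => x n - z n)
        (ContinuousLinearMap.proj n : (σ → ℝ) →L[ℝ] ℝ) z :=
      (hasFDerivAt_apply n z).sub_const (z n)
    simpa using h.fun_mul_of_apply_eq_zero h (sub_self _)
  simpa [eval_sqDist, sq] using HasFDerivAt.fun_sum fun n (_ : n ∈ univ) => hcoord n

noncomputable def linearForm (u z : σ → ℝ) : MvPolynomial σ ℝ := ∑ n, C (u n) * (X n - C (z n))

theorem eval_linearForm (u z x : σ → ℝ) : eval x (linearForm u z) = u ⬝ᵥ (x - z) := by
  simp [linearForm, dotProduct]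

theorem totalDegree_linearForm_le (u z : σ → ℝ) : (linearForm u z).totalDegree ≤ 1 := by
  refine (totalDegree_finsetSum _ _).trans (Finset.sup_le fun n _ => ?_)
  calc (C (u n) * (X n - C (z n)) : MvPolynomial σ ℝ).totalDegree
      ≤ (C (u n) : MvPolynomial σ ℝ).totalDegree + (X n - C (z n)).totalDegree :=
        totalDegree_mul _ _
    _ ≤ 0 + 1 := by
      gcongr
      · exact (totalDegree_C _).le
      · exact (totalDegree_sub_C_le _ _).trans (totalDegree_X n).le

theorem hasFDerivAt_eval_linearForm (u z a : σ → ℝ) :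
    HasFDerivAt (fun x => eval x (linearForm u z)) (dotProductCLM u) a := by
  simpa [eval_linearForm, dotProduct_sub] using
    (dotProductCLM u).hasFDerivAt.sub_const (dotProductCLM u z)

variable {ι : Type*} [DecidableEq ι] (z : ι → σ → ℝ)

theorem eval_prod_sqDist_of_mem {s : Finset ι} {j : ι} (hj : j ∈ s) :
    eval (z j) (∏ l ∈ s, sqDist (z l)) = 0 := by
  rw [← mul_prod_erase _ _ hj, eval_mul, eval_sqDist_self, zero_mul]

theorem hasFDerivAt_eval_prod_sqDist_of_mem {s : Finset ι} {j : ι} (hj : j ∈ s) :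
    HasFDerivAt (fun x => eval x (∏ l ∈ s, sqDist (z l))) (0 : (σ → ℝ) →L[ℝ] ℝ) (z j) := by
  rw [← mul_prod_erase _ _ hj]
  exact hasFDerivAt_zero_eval_mul (hasFDerivAt_eval_sqDist_self (z j)) (eval_sqDist_self _) _

variable [Fintype ι]

noncomputable def hermiteWeight (i : ι) : MvPolynomial σ ℝ :=
  C (eval (z i) (∏ j ∈ univ.erase i, sqDist (z j)))⁻¹ * ∏ j ∈ univ.erase i, sqDist (z j)

theorem totalDegree_hermiteWeight_le (i : ι) :
    (hermiteWeight z i).totalDegree ≤ 2 * (Fintype.card ι - 1) := by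
  calc (hermiteWeight z i).totalDegree
      ≤ (∏ j ∈ univ.erase i, sqDist (z j)).totalDegree := by
        rw [hermiteWeight, C_mul']
        exact totalDegree_smul_le _ _
    _ ≤ ∑ j ∈ univ.erase i, (sqDist (z j)).totalDegree := totalDegree_finsetProd _ _
    _ ≤ ∑ j ∈ univ.erase i, 2 := sum_le_sum fun j _ => totalDegree_sqDist_le (z j)
    _ = 2 * (Fintype.card ι - 1) := by
      rw [sum_const, card_erase_of_mem (mem_univ i), card_univ, smul_eq_mul, mul_comm]

theorem eval_hermiteWeight_self {z : ι → σ → ℝ} (hz : Function.Injective z) (i : ι) :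
    eval (z i) (hermiteWeight z i) = 1 := by
  have hpos : 0 < eval (z i) (∏ j ∈ univ.erase i, sqDist (z j)) := by
    rw [map_prod]
    exact prod_pos fun j hj => eval_sqDist_pos (hz.ne (ne_of_mem_erase hj).symm)
  rw [hermiteWeight, eval_mul, eval_C, inv_mul_cancel₀ hpos.ne']

theorem eval_hermiteWeight_of_ne {i j : ι} (hji : j ≠ i) :
    eval (z j) (hermiteWeight z i) = 0 := by
  rw [hermiteWeight, eval_mul, eval_prod_sqDist_of_mem z (mem_erase.mpr ⟨hji, mem_univ j⟩),
    mul_zero]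

theorem hasFDerivAt_eval_hermiteWeight_of_ne {i j : ι} (hji : j ≠ i) :
    HasFDerivAt (fun x => eval x (hermiteWeight z i)) (0 : (σ → ℝ) →L[ℝ] ℝ) (z j) := by
  rw [hermiteWeight, mul_comm]
  exact hasFDerivAt_zero_eval_mul
    (hasFDerivAt_eval_prod_sqDist_of_mem z (mem_erase.mpr ⟨hji, mem_univ j⟩))
    (eval_prod_sqDist_of_mem z (mem_erase.mpr ⟨hji, mem_univ j⟩)) _

variable {z}

theorem hasFDerivAt_eval_linearForm_mul_hermiteWeight (hz : Function.Injective z)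
    (u : ι → σ → ℝ) (i j : ι) :
    HasFDerivAt (fun x => eval x (linearForm (u i) (z i) * hermiteWeight z i))
      (if i = j then dotProductCLM (u i) else 0) (z j) := by
  split_ifs with hij
  · subst hij
    simpa [eval_linearForm, eval_hermiteWeight_self hz] using
      (hasFDerivAt_eval_linearForm (u i) (z i) (z i)).fun_mul_of_apply_eq_zero
        (hasFDerivAt_eval (hermiteWeight z i) _) (by simp [eval_linearForm])
  · rw [mul_comm]
    exact hasFDerivAt_zero_eval_mul (hasFDerivAt_eval_hermiteWeight_of_ne z (Ne.symm hij))
      (eval_hermiteWeight_of_ne z (Ne.symm hij)) _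

theorem exists_totalDegree_le_hasFDerivAt_eval (hz : Function.Injective z) (u : ι → σ → ℝ) :
    ∃ p : MvPolynomial σ ℝ, p.totalDegree ≤ 2 * Fintype.card ι - 1 ∧
      ∀ j, HasFDerivAt (fun x => eval x p) (dotProductCLM (u j)) (z j) := by
  refine ⟨∑ i, linearForm (u i) (z i) * hermiteWeight z i, ?_, fun j => ?_⟩
  · refine (totalDegree_finsetSum _ _).trans (Finset.sup_le fun i _ => ?_)
    have hcard : 0 < Fintype.card ι := Fintype.card_pos_iff.mpr ⟨i⟩
    have := (totalDegree_mul (linearForm (u i) (z i)) (hermiteWeight z i)).trans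
      (add_le_add (totalDegree_linearForm_le (u i) (z i)) (totalDegree_hermiteWeight_le z i))
    omega
  · simpa [map_sum] using
      HasFDerivAt.fun_sum fun i (_ : i ∈ univ) =>
        hasFDerivAt_eval_linearForm_mul_hermiteWeight hz u i j

end MvPolynomial

/-- Gradient interpolation (Sauer–Yorke–Casdagli): for `k` distinct points `z₁, …, z_k` in
`ℝ^N` and arbitrary vectors `u₁, …, u_k ∈ ℝ^N` there is an `N`-variate polynomial `p` of
total degree at most `2k - 1` with `∇p(zᵢ) = uᵢ` for all `i`, i.e. the differential of the
evaluation of `p` at `zᵢ` is the inner product with `uᵢ`. -/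
theorem stmt7 {N k : ℕ} (z : Fin k → (Fin N → ℝ)) (hz : Function.Injective z)
    (u : Fin k → (Fin N → ℝ)) :
    ∃ p : MvPolynomial (Fin N) ℝ, p.totalDegree ≤ 2 * k - 1 ∧
      ∀ i : Fin k, ∀ v : Fin N → ℝ,
        fderiv ℝ (fun x : Fin N → ℝ => MvPolynomial.eval x p) (z i) v = u i ⬝ᵥ v := by
  obtain ⟨p, hdeg, hderiv⟩ := exists_totalDegree_le_hasFDerivAt_eval hz u
  refine ⟨p, by simpa using hdeg, fun i v => ?_⟩
  rw [(hderiv i).fderiv, dotProductCLM_apply]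
end

section
/- Let M ⊆ ℝ^N be a compact embedded C¹ submanifold, T : M → M a C¹ diffeomorphism, h : M → ℝ a C¹ function, k ≥ dim M, and x ∈ M a point that is not periodic of any period p ∈ {1,…,k−1}. Let h₁,…,h_m be a basis of the space of N-variate polynomials of degree at most 2k−1, and for α ∈ ℝ^m define φ_α : M → ℝ^k by φ_α(y) = ((h+Σ_j α_j h_j)(y), (h+Σ_j α_j h_j)(Ty), …, (h+Σ_j α_j h_j)(T^{k−1}y)). Then the linear map Ψ : ℝ^m → Lin(T_x M, ℝ^k) given by Ψ(α) = Σ_j α_j D_x φ_{h_j,k} is surjective, where φ_{h_j,k} is the k-delay coordinate map of h_j. -/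
/-!
For pairwise distinct points `z i ∈ 𝕜^σ` and affine polynomials `ℓ_{ij}` with `ℓ_{ij}(z i) = 1`,
`ℓ_{ij}(z j) = 0`, the polynomial `∑ i (ψ i (y) - ψ i (z i)) ∏_{j ≠ i} ℓ_{ij}(y)²` has total degree
at most `2k - 1` and gradient `ψ s` at every `z s`: each squared factor kills both the value and
the gradient at `z j`. Injectivity of `T` on `M` and non-periodicity of `x` make the orbit points
`T^[i] x`, `i < k`, pairwise distinct, so any prescribed family of differentials along the orbit,
pulled back through left inverses of the injective maps `B i`, is realised by a polynomial of
degree at most `2k - 1`, hence by a combination of the basis `h`.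
-/
open MvPolynomial Finset Function

theorem iterate_apply_injective_of_not_isPeriodicPt {α : Type*} {M : Set α} {T : α → α}
    (hTmaps : Set.MapsTo T M M) (hTinj : Set.InjOn T M) {x : α} (hx : x ∈ M) {k : ℕ}
    (hper : ∀ p, 0 < p → p < k → ¬IsPeriodicPt T p x) :
    Injective fun i : Fin k => T^[i] x := by
  intro i j hij
  wlog hlt : i < j generalizing i j
  · rcases (not_lt.1 hlt).eq_or_lt with h | h
    exacts [h.symm, (this hij.symm h).symm]
  have hji : (i : ℕ) + (j - i) = j := by omega
  have hfix : IsPeriodicPt T (j - i) x :=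
    hTinj.iterate hTmaps i (hTmaps.iterate _ hx) hx (by rw [← iterate_add_apply, hji]; exact hij.symm)
  exact absurd hfix (hper _ (by omega) (by omega))

namespace MvPolynomial

section Field
variable {K σ : Type*} [Field K]

theorem exists_totalDegree_le_one_eval_eq_one_eval_eq_zero {a b : σ → K} (hab : a ≠ b) :
    ∃ L : MvPolynomial σ K, L.totalDegree ≤ 1 ∧ eval a L = 1 ∧ eval b L = 0 := by
  obtain ⟨n, hn⟩ := Function.ne_iff.1 hab
  refine ⟨C (a n - b n)⁻¹ * (X n - C (b n)), ?_, ?_, ?_⟩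
  · exact (totalDegree_mul _ _).trans (by
      simpa using (totalDegree_sub_C_le (X n : MvPolynomial σ K) (b n)).trans (totalDegree_X n).le)
  · simp [inv_mul_cancel₀ (sub_ne_zero.2 hn)]
  · simp

theorem exists_totalDegree_le_one_eval_eq_linearMap [Fintype σ] (φ : (σ → K) →ₗ[K] K) :
    ∃ p : MvPolynomial σ K, p.totalDegree ≤ 1 ∧ ∀ y, eval y p = φ y := by
  classical
  refine ⟨∑ n, φ (fun j => if n = j then 1 else 0) • X n, ?_, fun y => ?_⟩
  · exact totalDegree_finsetSum_le fun n _ =>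
      (totalDegree_smul_le _ _).trans (totalDegree_X n).le
  · simp [smul_eval, φ.pi_apply_eq_sum_univ y, mul_comm]

end Field

section Calculus
variable {𝕜 σ : Type*} [NontriviallyNormedField 𝕜] [CompleteSpace 𝕜] [Fintype σ]

theorem differentiable_eval (p : MvPolynomial σ 𝕜) : Differentiable 𝕜 (eval · p) :=
  fun y => (AnalyticOnNhd.eval_mvPolynomial (𝕜 := 𝕜) p y trivial).differentiableAt

theorem hasFDerivAt_eval_sq_mul {p : MvPolynomial σ 𝕜} {z : σ → 𝕜} (hp : eval z p = 0)
    (q : MvPolynomial σ 𝕜) : HasFDerivAt (eval · (p ^ 2 * q)) (0 : (σ → 𝕜) →L[𝕜] 𝕜) z := by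
  have h := ((differentiable_eval p z).hasFDerivAt).fun_mul
    (((differentiable_eval p z).hasFDerivAt).fun_mul (differentiable_eval q z).hasFDerivAt)
  simp only [pow_two, mul_assoc, map_mul]
  refine h.congr_fderiv ?_
  ext v
  simp [hp]

theorem fderiv_eval_sum_smul {ι : Type*} (s : Finset ι) (c : ι → 𝕜) (p : ι → MvPolynomial σ 𝕜)
    (z : σ → 𝕜) :
    fderiv 𝕜 (eval · (∑ j ∈ s, c j • p j)) z = ∑ j ∈ s, c j • fderiv 𝕜 (eval · (p j)) z := by
  simp_rw [map_sum, smul_eval]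
  rw [fderiv_fun_sum fun j _ => ((differentiable_eval _ z).const_mul _)]
  exact Finset.sum_congr rfl fun j _ => fderiv_const_mul (differentiable_eval _ z) _

theorem exists_totalDegree_le_eval_eq_ite_hasFDerivAt_eq_zero {ι : Type*} [Fintype ι]
    [DecidableEq ι] {z : ι → σ → 𝕜} (hz : Injective z) (i : ι) :
    ∃ P : MvPolynomial σ 𝕜, P.totalDegree ≤ 2 * (Fintype.card ι - 1) ∧
      (∀ s, eval (z s) P = if s = i then 1 else 0) ∧
      ∀ s ≠ i, HasFDerivAt (eval · P) (0 : (σ → 𝕜) →L[𝕜] 𝕜) (z s) := by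
  have hL : ∀ j, ∃ L : MvPolynomial σ 𝕜, L.totalDegree ≤ 1 ∧ eval (z j) L = 0 ∧
      (j ≠ i → eval (z i) L = 1) := by
    intro j
    by_cases hj : j = i
    · exact ⟨0, by simp, by simp, fun h => absurd hj h⟩
    · obtain ⟨L, hdeg, hi, hj'⟩ :=
        exists_totalDegree_le_one_eval_eq_one_eval_eq_zero (hz.ne (Ne.symm hj))
      exact ⟨L, hdeg, hj', fun _ => hi⟩
  choose L hLdeg hLzero hLone using hL
  have hfactor : ∀ s ≠ i, ∃ q, ∏ j ∈ univ.erase i, L j ^ 2 = L s ^ 2 * q := fun s hs =>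
    ⟨_, (mul_prod_erase _ _ (mem_erase.2 ⟨hs, mem_univ s⟩)).symm⟩
  refine ⟨∏ j ∈ univ.erase i, L j ^ 2, ?_, fun s => ?_, fun s hs => ?_⟩
  · refine (totalDegree_finsetProd _ _).trans ?_
    calc ∑ j ∈ univ.erase i, (L j ^ 2).totalDegree
        ≤ ∑ _j ∈ univ.erase i, 2 :=
          sum_le_sum fun j _ => (totalDegree_pow _ _).trans (by linarith [hLdeg j])
      _ = 2 * (Fintype.card ι - 1) := by simp [card_erase_of_mem, mul_comm]
  · split_ifs with hs
    · subst hs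
      simp only [map_prod, map_pow]
      exact prod_eq_one fun j hj => by rw [hLone j (ne_of_mem_erase hj), one_pow]
    · obtain ⟨q, hq⟩ := hfactor s hs
      simp [hq, hLzero s]
  · obtain ⟨q, hq⟩ := hfactor s hs
    rw [hq]
    exact hasFDerivAt_eval_sq_mul (hLzero s) q

theorem exists_totalDegree_le_hasFDerivAt_eval_s9 {ι : Type*} [Fintype ι] {z : ι → σ → 𝕜}
    (hz : Injective z) (ψ : ι → (σ → 𝕜) →L[𝕜] 𝕜) :
    ∃ Q : MvPolynomial σ 𝕜, Q.totalDegree ≤ 2 * Fintype.card ι - 1 ∧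
      ∀ s, HasFDerivAt (eval · Q) (ψ s) (z s) := by
  classical
  choose P hPdeg hPval hPder using exists_totalDegree_le_eval_eq_ite_hasFDerivAt_eq_zero hz
  choose A hAdeg hA using fun i =>
    exists_totalDegree_le_one_eval_eq_linearMap (ψ i : (σ → 𝕜) →ₗ[𝕜] 𝕜)
  refine ⟨∑ i, (A i - C (ψ i (z i))) * P i, ?_, fun s => ?_⟩
  · refine totalDegree_finsetSum_le fun i _ => (totalDegree_mul _ _).trans ?_
    have : 0 < Fintype.card ι := Fintype.card_pos_iff.2 ⟨i⟩
    have := (totalDegree_sub_C_le (A i) (ψ i (z i))).trans (hAdeg i)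
    have := hPdeg i
    omega
  have hterm : ∀ i, HasFDerivAt (fun y => eval y ((A i - C (ψ i (z i))) * P i))
      (if i = s then ψ s else 0) (z s) := by
    intro i
    have h := ((ψ i).hasFDerivAt.sub_const (ψ i (z i))).fun_mul
      (differentiable_eval (P i) (z s)).hasFDerivAt
    simp only [map_mul, map_sub, eval_C, hA]
    refine h.congr_fderiv ?_
    split_ifs with hi
    · subst hi
      ext v
      simp [hPval]
    · rw [(hPder i s (Ne.symm hi)).fderiv]
      ext v
      simp [hPval, Ne.symm hi]
  simpa using HasFDerivAt.fun_sum (u := univ) fun i _ => hterm i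

end Calculus
end MvPolynomial

theorem stmt9_general {N k m : ℕ}
    (M : Set (Fin N → ℝ))
    (T : (Fin N → ℝ) → (Fin N → ℝ)) (hTmaps : Set.MapsTo T M M) (hTinj : Set.InjOn T M)
    (x : Fin N → ℝ) (hx : x ∈ M)
    (hper : ∀ p : ℕ, 1 ≤ p → p ≤ k - 1 → T^[p] x ≠ x)
    (z : Fin k → (Fin N → ℝ)) (hz : ∀ i : Fin k, z i = T^[(i : ℕ)] x)
    (E0 : Submodule ℝ (Fin N → ℝ))
    (B : Fin k → (E0 →ₗ[ℝ] (Fin N → ℝ)))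
    (hBinj : ∀ i, Function.Injective (B i))
    (h : Module.Basis (Fin m) ℝ (MvPolynomial.restrictTotalDegree (Fin N) ℝ (2 * k - 1))) :
    Function.Surjective (fun α : Fin m → ℝ =>
      ∑ j : Fin m, α j •
        (LinearMap.pi fun i : Fin k =>
          (fderiv ℝ (fun y : Fin N → ℝ =>
              MvPolynomial.eval y ((h j : MvPolynomial (Fin N) ℝ))) (z i)).toLinearMap ∘ₗ
            B i : E0 →ₗ[ℝ] (Fin k → ℝ))) := by
  intro L
  have hzinj : Injective z := by
    rw [funext hz]
    exact iterate_apply_injective_of_not_isPeriodicPt hTmaps hTinj hx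
      fun p hp hpk => hper p hp (by omega)
  choose g hg using fun i =>
    (B i).exists_leftInverse_of_injective (LinearMap.ker_eq_bot.2 (hBinj i))
  obtain ⟨Q, hQdeg, hQ⟩ := exists_totalDegree_le_hasFDerivAt_eval_s9 hzinj
    fun i => (LinearMap.proj i ∘ₗ L ∘ₗ g i).toContinuousLinearMap
  set q : restrictTotalDegree (Fin N) ℝ (2 * k - 1) :=
    ⟨Q, (mem_restrictTotalDegree _ _ _).2 (by simpa using hQdeg)⟩
  have hQsum : ∑ j, h.repr q j • (h j : MvPolynomial (Fin N) ℝ) = Q := by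
    simpa only [Submodule.coe_sum, Submodule.coe_smul] using congrArg Subtype.val (h.sum_repr q)
  refine ⟨h.repr q, ?_⟩
  calc _ = LinearMap.pi fun i =>
          (fderiv ℝ (fun y => MvPolynomial.eval y Q) (z i)).toLinearMap ∘ₗ B i := by
        ext v i
        rw [← hQsum]
        simp only [fderiv_eval_sum_smul]
        simp
    _ = L := by
        ext v i
        have hgi : g i (B i v) = v := LinearMap.congr_fun (hg i) v
        simp [(hQ i).fderiv, hgi]

/-- Surjectivity of the perturbation map `Ψ` for delay-coordinate maps.

Setting: `M ⊆ ℝ^N` is a compact embedded C¹ submanifold, `T : ℝ^N → ℝ^N` restricts to a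
C¹ diffeomorphism of `M`, and `x ∈ M` is not periodic of any period `p ∈ {1,…,k−1}`, so the
orbit points `z i = T^[i] x`, `i = 0,…,k−1`, are pairwise distinct. `E0 ⊆ ℝ^N` is the
tangent space `T_x M`, and `B i : E0 → ℝ^N` is the injective linear map
`D_{T^{i-1}x}T ∘ ⋯ ∘ D_xT : T_x M → T_{T^i x}M ⊆ ℝ^N` (composition of differentials of `T`
along the orbit, `B 0` being the inclusion of `E0`). By the chain rule, the differential at
`x` of the `k`-delay coordinate map `φ_{g,k}` of an observable `g` is
`v ↦ (Dg(z i) (B i v))_{i<k}`. If `h₁,…,h_m` is a basis of the `N`-variate polynomials of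
degree at most `2k−1`, then `Ψ : ℝ^m → Lin(T_x M, ℝ^k)`, `Ψ α = Σ_j α_j D_x φ_{h_j,k}`, is
surjective. -/
theorem stmt9 {N k m : ℕ} (hk : 1 ≤ k)
    (M : Set (Fin N → ℝ)) (hM : IsCompact M)
    (T : (Fin N → ℝ) → (Fin N → ℝ)) (hTmaps : Set.MapsTo T M M) (hTinj : Set.InjOn T M)
    (x : Fin N → ℝ) (hx : x ∈ M)
    (hper : ∀ p : ℕ, 1 ≤ p → p ≤ k - 1 → T^[p] x ≠ x)
    (z : Fin k → (Fin N → ℝ)) (hz : ∀ i : Fin k, z i = T^[(i : ℕ)] x)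
    (E0 : Submodule ℝ (Fin N → ℝ))
    (B : Fin k → (E0 →ₗ[ℝ] (Fin N → ℝ)))
    (hBinj : ∀ i, Function.Injective (B i))
    (hB0 : B ⟨0, hk⟩ = E0.subtype)
    (h : Module.Basis (Fin m) ℝ (MvPolynomial.restrictTotalDegree (Fin N) ℝ (2 * k - 1))) :
    Function.Surjective (fun α : Fin m → ℝ =>
      ∑ j : Fin m, α j •
        (LinearMap.pi fun i : Fin k =>
          (fderiv ℝ (fun y : Fin N → ℝ =>
              MvPolynomial.eval y ((h j : MvPolynomial (Fin N) ℝ))) (z i)).toLinearMap ∘ₗ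
            B i : E0 →ₗ[ℝ] (Fin k → ℝ))) :=
  stmt9_general M T hTmaps hTinj x hx hper z hz E0 B hBinj h
end

section
/- Let M ⊆ ℝ^N be a compact set, T : M → M an injective map, k ∈ ℕ, and h₁, …, h_m a basis of the N-variate polynomials of degree at most 2k−1. For x, y ∈ M let D_{x,y} be the k×m matrix with entries h_j(T^{i-1}x) − h_j(T^{i-1}y). If x is not a periodic point of T of period p for any p ∈ {1, …, k−1}, and x does not lie in the full orbit of y (i.e., x ≠ Tⁿy and y ≠ Tⁿx for all n ≥ 0), then rank(D_{x,y}) = k. -/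
/-!
The rows of `D_{x,y}` are the functionals `P ↦ P(Tⁱx) − P(Tⁱy)`, `i < k`, on polynomials of
degree `≤ 2k − 1`, read in the basis `h`. Injectivity of `T` turns the hypotheses into: the
points `Tⁱx` are pairwise distinct and differ from every `Tʲy`. So for each `i₀`, a product of
`2k − 1` affine factors, each vanishing at one of the other points but not at `T^{i₀}x`, is
killed by every functional except the `i₀`-th; hence the functionals, and the rows, are
linearly independent.
-/

open MvPolynomial Finset

section Interpolation

variable {σ K : Type*} [CommRing K] [IsDomain K]

theorem MvPolynomial.exists_totalDegree_le_eval_ne_zero_of_notMem (p : σ → K)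
    (S : Finset (σ → K)) (hp : p ∉ S) :
    ∃ P : MvPolynomial σ K, P.totalDegree ≤ #S ∧ eval p P ≠ 0 ∧ ∀ q ∈ S, eval q P = 0 := by
  have hsep : ∀ q : S, ∃ i, p i ≠ (q : σ → K) i := fun q =>
    Function.ne_iff.mp fun hpq => hp (hpq ▸ q.2)
  choose c hc using hsep
  refine ⟨∏ q ∈ S.attach, (X (c q) - C ((q : σ → K) (c q))), ?_, ?_, ?_⟩
  · calc (∏ q ∈ S.attach, (X (c q) - C ((q : σ → K) (c q)))).totalDegree
        ≤ ∑ q ∈ S.attach, (X (c q) - C ((q : σ → K) (c q)) : MvPolynomial σ K).totalDegree :=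
          totalDegree_finsetProd _ _
      _ ≤ ∑ _q ∈ S.attach, 1 := sum_le_sum fun q _ =>
          (totalDegree_sub_C_le _ _).trans (totalDegree_X _).le
      _ = #S := by simp
  · simpa [prod_eq_zero_iff, sub_eq_zero] using hc
  · intro q hq
    simpa using prod_eq_zero (mem_attach _ ⟨q, hq⟩) (by simp)

end Interpolation

section LinearIndependence

variable {ι ι' K V : Type*} [CommRing K] [AddCommGroup V] [Module K V]

theorem LinearMap.linearIndependent_of_exists_apply_ne_zero [IsDomain K] [Fintype ι]
    (f : ι → V →ₗ[K] K) (hf : ∀ i, ∃ v, f i v ≠ 0 ∧ ∀ j ≠ i, f j v = 0) :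
    LinearIndependent K f := by
  refine Fintype.linearIndependent_iff.mpr fun g hg i => ?_
  obtain ⟨v, hvi, hvj⟩ := hf i
  have hgv : ∑ j, g j * f j v = 0 := by simpa using LinearMap.congr_fun hg v
  rw [sum_eq_single i (fun j _ hji => by rw [hvj j hji, mul_zero]) (by simp)] at hgv
  exact (mul_eq_zero.mp hgv).resolve_right hvi

theorem LinearIndependent.apply_basis (b : Module.Basis ι' K V) {f : ι → V →ₗ[K] K}
    (hf : LinearIndependent K f) : LinearIndependent K fun i j => f i (b j) :=
  hf.map' (b.constr K).symm.toLinearMap (b.constr K).symm.ker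

end LinearIndependence

theorem linearIndependent_aeval_sub_aeval_restrictTotalDegree {ι σ K : Type*} [Fintype ι]
    [CommRing K] [IsDomain K] {d : ℕ} (hd : 2 * Fintype.card ι - 1 ≤ d) {a b : ι → σ → K}
    (ha : Function.Injective a) (hab : ∀ i j, a i ≠ b j) :
    LinearIndependent K fun i =>
      ((aeval (a i) : MvPolynomial σ K →ₐ[K] K).toLinearMap - (aeval (b i)).toLinearMap) ∘ₗ
        (restrictTotalDegree σ K d).subtype := by
  classical
  refine LinearMap.linearIndependent_of_exists_apply_ne_zero _ fun i₀ => ?_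
  let S := (univ.erase i₀).image a ∪ univ.image b
  have hS : a i₀ ∉ S := by
    simp only [S, mem_union, mem_image, mem_erase, mem_univ, and_true, true_and, not_or,
      not_exists, ha.eq_iff]
    exact ⟨fun _ hi => hi.1 hi.2, fun i hbi => hab i₀ i hbi.symm⟩
  have hcard : #S ≤ d := calc
    #S ≤ #(univ.erase i₀) + #(univ : Finset ι) :=
      (card_union_le _ _).trans (add_le_add card_image_le card_image_le)
    _ ≤ d := by
      rw [card_erase_of_mem (mem_univ _), card_univ]
      have hι : 0 < Fintype.card ι := Fintype.card_pos_iff.mpr ⟨i₀⟩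
      omega
  obtain ⟨P, hdeg, hP₀, hPS⟩ := exists_totalDegree_le_eval_ne_zero_of_notMem (a i₀) S hS
  have hb : ∀ i, eval (b i) P = 0 := fun i =>
    hPS _ (mem_union_right _ (mem_image_of_mem _ (mem_univ i)))
  refine ⟨⟨P, (mem_restrictTotalDegree _ _ _).mpr (hdeg.trans hcard)⟩, ?_, fun i hi => ?_⟩
  · simpa [hb] using hP₀
  · have ha : a i ∈ S := mem_union_left _ (mem_image_of_mem _ (mem_erase.mpr ⟨hi, mem_univ i⟩))
    simpa [hb] using hPS _ ha

section Orbits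

variable {α : Type*} {M : Set α} {T : α → α} {x y : α}

theorem Set.InjOn.eq_iterate_sub_of_iterate_eq (hinj : InjOn T M) (hmaps : MapsTo T M M)
    (hx : x ∈ M) (hy : y ∈ M) {i j : ℕ} (hij : i ≤ j) (h : T^[i] x = T^[j] y) :
    x = T^[j - i] y := by
  refine hinj.iterate hmaps i hx (hmaps.iterate _ hy) ?_
  rwa [← Function.iterate_add_apply, Nat.add_sub_cancel' hij]

theorem Set.InjOn.iterate_injective_fin (hinj : InjOn T M) (hmaps : MapsTo T M M) (hx : x ∈ M)
    {k : ℕ} (hper : ∀ p : ℕ, 1 ≤ p → p ≤ k - 1 → T^[p] x ≠ x) :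
    Function.Injective fun i : Fin k => T^[(i : ℕ)] x := by
  have key : ∀ i j : Fin k, i < j → T^[(i : ℕ)] x ≠ T^[(j : ℕ)] x := fun i j hij h =>
    hper (j - i) (by omega) (by omega)
      (hinj.eq_iterate_sub_of_iterate_eq hmaps hx hx hij.le h).symm
  intro i j h
  by_contra hne
  rcases lt_or_gt_of_ne hne with hij | hji
  · exact key i j hij h
  · exact key j i hji h.symm

theorem Set.InjOn.iterate_ne_iterate (hinj : InjOn T M) (hmaps : MapsTo T M M) (hx : x ∈ M)
    (hy : y ∈ M) (horb : ∀ n : ℕ, T^[n] y ≠ x ∧ T^[n] x ≠ y) (i j : ℕ) :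
    T^[i] x ≠ T^[j] y := fun h => by
  rcases le_total i j with hij | hji
  · exact (horb _).1 (hinj.eq_iterate_sub_of_iterate_eq hmaps hx hy hij h).symm
  · exact (horb _).2 (hinj.eq_iterate_sub_of_iterate_eq hmaps hy hx hji h.symm).symm

end Orbits

theorem stmt19_general {N k m : ℕ} (M : Set (Fin N → ℝ))
    (T : (Fin N → ℝ) → (Fin N → ℝ)) (hTmaps : Set.MapsTo T M M)
    (hTinj : Set.InjOn T M)
    (h : Module.Basis (Fin m) ℝ (MvPolynomial.restrictTotalDegree (Fin N) ℝ (2 * k - 1)))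
    (x y : Fin N → ℝ) (hx : x ∈ M) (hy : y ∈ M)
    (hper : ∀ p : ℕ, 1 ≤ p → p ≤ k - 1 → T^[p] x ≠ x)
    (horb : ∀ n : ℕ, T^[n] y ≠ x ∧ T^[n] x ≠ y)
    (D : Matrix (Fin k) (Fin m) ℝ)
    (hD : ∀ (i : Fin k) (j : Fin m),
      D i j = MvPolynomial.eval (T^[(i : ℕ)] x) ((h j : MvPolynomial (Fin N) ℝ))
            - MvPolynomial.eval (T^[(i : ℕ)] y) ((h j : MvPolynomial (Fin N) ℝ))) :
    D.rank = k := by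
  have hfun := linearIndependent_aeval_sub_aeval_restrictTotalDegree (by rw [Fintype.card_fin])
    (hTinj.iterate_injective_fin hTmaps hx hper)
    (fun i j => hTinj.iterate_ne_iterate hTmaps hx hy horb i j)
  have hrows : LinearIndependent ℝ D.row := by
    have hDrow : D.row = fun i j => _ := funext₂ hD
    rw [hDrow]
    exact hfun.apply_basis h
  rw [hrows.rank_matrix, Fintype.card_fin]

/-- Let `M ⊆ ℝ^N` be compact, `T : M → M` injective, and `h₁,…,h_m` a basis of the
`N`-variate polynomials of total degree at most `2k−1`. If `x ∈ M` is not periodic of any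
period `p ∈ {1,…,k−1}` and `x` is not in the full orbit of `y ∈ M` (i.e. `x ≠ Tⁿy` and
`y ≠ Tⁿx` for all `n ≥ 0`), then the `k × m` matrix `D_{x,y}` with entries
`h_j(T^{i-1}x) − h_j(T^{i-1}y)` has rank `k`. -/
theorem stmt19 {N k m : ℕ} (hk : 1 ≤ k) (M : Set (Fin N → ℝ)) (hM : IsCompact M)
    (T : (Fin N → ℝ) → (Fin N → ℝ)) (hTmaps : Set.MapsTo T M M)
    (hTinj : Set.InjOn T M)
    (h : Module.Basis (Fin m) ℝ (MvPolynomial.restrictTotalDegree (Fin N) ℝ (2 * k - 1)))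
    (x y : Fin N → ℝ) (hx : x ∈ M) (hy : y ∈ M)
    (hper : ∀ p : ℕ, 1 ≤ p → p ≤ k - 1 → T^[p] x ≠ x)
    (horb : ∀ n : ℕ, T^[n] y ≠ x ∧ T^[n] x ≠ y)
    (D : Matrix (Fin k) (Fin m) ℝ)
    (hD : ∀ (i : Fin k) (j : Fin m),
      D i j = MvPolynomial.eval (T^[(i : ℕ)] x) ((h j : MvPolynomial (Fin N) ℝ))
            - MvPolynomial.eval (T^[(i : ℕ)] y) ((h j : MvPolynomial (Fin N) ℝ))) :
    D.rank = k :=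
  stmt19_general M T hTmaps hTinj h x y hx hy hper horb D hD
end
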